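/- Let K be a field, T a finite-dimensional vector space over K, and y ⊆ z ⊆ T subspaces with dim y = 1 and dim z = dim T − 1. Let θ : T/z → T be an injective linear map with range equal to y. Then for a subspace x ⊆ T and a linear map ξ : T/x → x, the following are equivalent: (i) the image of range ξ under the inclusion x → T equals y, the preimage of ker ξ under the quotient map T → T/x equals z, and for all t ∈ T, ξ([t]_x) viewed in T equals θ([t]_z); (ii) y ⊆ x ⊆ z and for all t ∈ T, ξ([t]_x) viewed in T equals θ([t]_z). -/
import Mathlib


/-- Description of a bicharacteristic leaf: for `(x; ξ)`, the conditions
`im ξ = y`, `z = preimage of ker ξ`, `ξ = θ∘ℓ` are equivalent to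
`y ⊆ x ⊆ z` and `ξ = θ∘ℓ`. -/
theorem bicharacteristic_leaf_description
    (K T : Type*) [Field K] [AddCommGroup T] [Module K T] [FiniteDimensional K T]
    (y z : Submodule K T) (hyz : y ≤ z)
    (hy1 : Module.finrank K y = 1)
    (hz1 : Module.finrank K z + 1 = Module.finrank K T)
    (θ : (T ⧸ z) →ₗ[K] T) (hθinj : Function.Injective θ)
    (hθrange : LinearMap.range θ = y)
    (x : Submodule K T) (ξ : (T ⧸ x) →ₗ[K] x) :
    ((LinearMap.range ξ).map x.subtype = y ∧
     (LinearMap.ker ξ).comap x.mkQ = z ∧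
     (∀ t : T, (ξ (x.mkQ t) : T) = θ (z.mkQ t))) ↔
    (y ≤ x ∧ x ≤ z ∧ (∀ t : T, (ξ (x.mkQ t) : T) = θ (z.mkQ t))) := by
  constructor
  · rintro ⟨h1, h2, h3⟩
    refine ⟨?_, ?_, h3⟩
    · rw [← h1]
      intro t ht
      rcases ht with ⟨s, _, rfl⟩
      exact s.2
    · intro t ht
      rw [← h2]
      simp only [Submodule.mem_comap, LinearMap.mem_ker]
      have : x.mkQ t = 0 := (Submodule.Quotient.mk_eq_zero x).mpr ht
      rw [this, map_zero]
  · rintro ⟨hyx, hxz, h3⟩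
    refine ⟨?_, ?_, h3⟩
    · apply le_antisymm
      · rintro t ⟨s, ⟨q, rfl⟩, rfl⟩
        obtain ⟨u, rfl⟩ := x.mkQ_surjective q
        rw [← hθrange]
        exact ⟨z.mkQ u, (h3 u).symm⟩
      · intro t ht
        rw [← hθrange] at ht
        obtain ⟨q, rfl⟩ := ht
        obtain ⟨u, rfl⟩ := z.mkQ_surjective q
        exact ⟨ξ (x.mkQ u), ⟨x.mkQ u, rfl⟩, (h3 u)⟩
    · ext t
      simp only [Submodule.mem_comap, LinearMap.mem_ker]
      constructor
      · intro h
        have : (ξ (x.mkQ t) : T) = 0 := by rw [h]; rfl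
        rw [h3 t] at this
        have h0 : z.mkQ t = 0 := hθinj (by rw [this, map_zero])
        exact (Submodule.Quotient.mk_eq_zero z).mp h0
      · intro ht
        have hz : z.mkQ t = 0 := (Submodule.Quotient.mk_eq_zero z).mpr ht
        have : (ξ (x.mkQ t) : T) = 0 := by rw [h3 t, hz, map_zero]
        exact Subtype.coe_injective this
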